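/- arXiv:1902.01533 — 3 statements merged into one kernel-verified Lean document; each statement's English description precedes it below -/
import Mathlib

section
/- Let α < β be real numbers. For every finite collection (m_1,n_1),…,(m_l,n_l) of pairs of integers there exists a pair of integers (r,s) such that for every i ∈ {1,…,l}: (i) −α(m_i−r) + (n_i−s) ≥ 0 if and only if −α m_i + n_i ≥ 0, and (ii) −β(m_i−r) + (n_i−s) > 0. -/
set_option maxHeartbeats 1000000
set_option synthInstance.maxHeartbeats 400000

noncomputable section
open scoped ENNReal Classical

/-- Auxiliary: for any `ε > 0` and `R`, there are integers `r, s` with `r ≥ R`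
and `α r - s ∈ [0, ε)`. -/
lemma concave_lemma_shift_aux (α : ℝ) {ε : ℝ} (hε : 0 < ε) (R : ℝ) :
    ∃ r s : ℤ, R ≤ (r : ℝ) ∧ 0 ≤ α * r - s ∧ α * r - s < ε := by
  obtain ⟨n, hn⟩ := exists_nat_gt (1 / ε)
  have hn0 : 0 < n := by
    have h1 : (0:ℝ) < 1/ε := by positivity
    exact_mod_cast (h1.trans hn).le.lt_of_ne' (by exact_mod_cast (h1.trans hn).ne')
  obtain ⟨p, q, hq0, _, habs⟩ := Real.exists_int_int_abs_mul_sub_le α hn0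
  set c : ℝ := (q : ℝ) * α - p with hcdef
  have hnn : (0:ℝ) < (n:ℝ) := by exact_mod_cast hn0
  have hcε : |c| < ε := by
    refine lt_of_le_of_lt habs ?_
    rw [div_lt_iff₀ (by linarith)]
    have h1 : 1 < ε * n := by
      rw [div_lt_iff₀ hε] at hn; linarith [hn]
    nlinarith
  have hq1 : (1:ℤ) ≤ q := hq0
  have hq1R : (1:ℝ) ≤ (q:ℝ) := by exact_mod_cast hq1
  rcases lt_trichotomy c 0 with h | h | h
  · -- c < 0
    have hcpos : 0 < -c := by linarith
    set k : ℤ := max 1 ⌈(R + 1) * (-c)⌉ with hk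
    have hk1 : (1:ℤ) ≤ k := le_max_left _ _
    have hkR : (R + 1) * (-c) ≤ (k : ℝ) := by
      refine le_trans (Int.le_ceil _) ?_
      exact_mod_cast le_max_right (1:ℤ) _
    set j : ℤ := ⌊(k : ℝ) / (-c)⌋ with hj
    have hj_le : (j : ℝ) ≤ (k : ℝ) / (-c) := Int.floor_le _
    have hj_gt : (k : ℝ) / (-c) - 1 < (j : ℝ) := Int.sub_one_lt_floor _
    have hjR : R < (j : ℝ) := by
      have h2 : R + 1 ≤ (k : ℝ) / (-c) := (le_div_iff₀ hcpos).2 hkR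
      linarith
    have hj0 : 0 ≤ j := by
      refine Int.floor_nonneg.2 ?_
      have : (0:ℝ) ≤ (k:ℝ) := by exact_mod_cast hk1.trans' (by norm_num)
      positivity
    have hjc1 : (j : ℝ) * (-c) ≤ (k : ℝ) := (le_div_iff₀ hcpos).1 hj_le
    have hjc2 : (k : ℝ) < ((j : ℝ) + 1) * (-c) := (div_lt_iff₀ hcpos).1 (by linarith)
    refine ⟨j * q, j * p - k, ?_, ?_, ?_⟩
    · have h3 : j ≤ j * q := by
        calc j = j * 1 := (mul_one j).symm
        _ ≤ j * q := mul_le_mul_of_nonneg_left hq1 hj0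
      have h4 : (j : ℝ) ≤ ((j * q : ℤ) : ℝ) := by exact_mod_cast h3
      linarith
    · push_cast
      have : α * ((j:ℝ) * q) - ((j:ℝ) * p - k) = (j:ℝ) * c + k := by
        rw [hcdef]; ring
      rw [this]; linarith
    · push_cast
      have : α * ((j:ℝ) * q) - ((j:ℝ) * p - k) = (j:ℝ) * c + k := by
        rw [hcdef]; ring
      rw [this]
      rw [abs_of_neg h] at hcε
      linarith
  · -- c = 0
    set k : ℤ := max 1 ⌈R⌉ with hk
    have hk1 : (1:ℤ) ≤ k := le_max_left _ _
    have hkR : R ≤ (k : ℝ) := by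
      refine le_trans (Int.le_ceil _) ?_
      exact_mod_cast le_max_right (1:ℤ) _
    refine ⟨k * q, k * p, ?_, ?_, ?_⟩
    · have h3 : k ≤ k * q := by
        calc k = k * 1 := (mul_one k).symm
        _ ≤ k * q := mul_le_mul_of_nonneg_left hq1 (by linarith)
      have h4 : (k : ℝ) ≤ ((k * q : ℤ) : ℝ) := by exact_mod_cast h3
      linarith
    · push_cast
      have : α * ((k:ℝ) * q) - (k:ℝ) * p = (k:ℝ) * c := by rw [hcdef]; ring
      rw [this, h, mul_zero]
    · push_cast
      have : α * ((k:ℝ) * q) - (k:ℝ) * p = (k:ℝ) * c := by rw [hcdef]; ring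
      rw [this, h, mul_zero]; exact hε
  · -- c > 0
    set k : ℤ := max 1 ⌈(R + 1) * c⌉ with hk
    have hk1 : (1:ℤ) ≤ k := le_max_left _ _
    have hkR : (R + 1) * c ≤ (k : ℝ) := by
      refine le_trans (Int.le_ceil _) ?_
      exact_mod_cast le_max_right (1:ℤ) _
    set j : ℤ := ⌈(k : ℝ) / c⌉ with hj
    have hj_ge : (k : ℝ) / c ≤ (j : ℝ) := Int.le_ceil _
    have hj_lt : (j : ℝ) < (k : ℝ) / c + 1 := Int.ceil_lt_add_one _
    have hjR : R < (j : ℝ) := by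
      have h2 : R + 1 ≤ (k : ℝ) / c := (le_div_iff₀ h).2 hkR
      linarith
    have hj0 : 0 ≤ j := by
      refine Int.ceil_nonneg ?_
      have : (0:ℝ) ≤ (k:ℝ) := by exact_mod_cast hk1.trans' (by norm_num)
      positivity
    have hjc1 : (k : ℝ) ≤ (j : ℝ) * c := by
      have := (div_le_iff₀ h).1 hj_ge; linarith
    have hjc2 : (j : ℝ) * c < (k : ℝ) + c := by
      have := (lt_div_iff₀ h).1 (show (j:ℝ) - 1 < (k:ℝ)/c by linarith)
      nlinarith
    refine ⟨j * q, j * p + k, ?_, ?_, ?_⟩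
    · have h3 : j ≤ j * q := by
        calc j = j * 1 := (mul_one j).symm
        _ ≤ j * q := mul_le_mul_of_nonneg_left hq1 hj0
      have h4 : (j : ℝ) ≤ ((j * q : ℤ) : ℝ) := by exact_mod_cast h3
      linarith
    · push_cast
      have : α * ((j:ℝ) * q) - ((j:ℝ) * p + k) = (j:ℝ) * c - k := by
        rw [hcdef]; ring
      rw [this]; linarith
    · push_cast
      have : α * ((j:ℝ) * q) - ((j:ℝ) * p + k) = (j:ℝ) * c - k := by
        rw [hcdef]; ring
      rw [this]
      rw [abs_of_pos h] at hcε
      linarith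

/-- For `α < β` and any finite collection of integer pairs `(mᵢ, nᵢ)` there
is an integer pair `(r,s)` such that for every `i`: `-α(mᵢ-r)+(nᵢ-s) ≥ 0 ↔ -αmᵢ+nᵢ ≥ 0`
and `-β(mᵢ-r)+(nᵢ-s) > 0`. -/
theorem concave_lemma_shift (α β : ℝ) (hαβ : α < β) (l : ℕ) (m n : Fin l → ℤ) :
    ∃ r s : ℤ, ∀ i : Fin l,
      ((0:ℝ) ≤ -α * ((m i : ℝ) - (r : ℝ)) + ((n i : ℝ) - (s : ℝ)) ↔
        (0:ℝ) ≤ -α * (m i : ℝ) + (n i : ℝ)) ∧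
      (0:ℝ) < -β * ((m i : ℝ) - (r : ℝ)) + ((n i : ℝ) - (s : ℝ)) := by
  obtain ⟨M, hM⟩ := Finite.exists_le fun i : Fin l => -(-β * (m i : ℝ) + (n i : ℝ))
  obtain ⟨E, hE⟩ := Finite.exists_le fun i : Fin l =>
    if -α * (m i : ℝ) + (n i : ℝ) < 0 then (-(-α * (m i : ℝ) + (n i : ℝ)))⁻¹ else 1
  set ε : ℝ := (max E 1)⁻¹ with hεdef
  have hεpos : 0 < ε := by
    have : (0:ℝ) < max E 1 := lt_of_lt_of_le one_pos (le_max_right _ _)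
    positivity
  have hεle : ∀ i : Fin l, -α * (m i : ℝ) + (n i : ℝ) < 0 →
      ε ≤ -(-α * (m i : ℝ) + (n i : ℝ)) := by
    intro i hi
    have h1 := hE i
    rw [if_pos hi] at h1
    have h3 : 0 < -(-α * (m i : ℝ) + (n i : ℝ)) := by linarith
    have h2 : (-(-α * (m i : ℝ) + (n i : ℝ)))⁻¹ ≤ max E 1 :=
      h1.trans (le_max_left _ _)
    have h4 : (max E 1)⁻¹ ≤ ((-(-α * (m i : ℝ) + (n i : ℝ)))⁻¹)⁻¹ :=
      inv_anti₀ (by positivity) h2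
    rwa [inv_inv] at h4
  have hβα : 0 < β - α := sub_pos.2 hαβ
  obtain ⟨r, s, hrR, hc0, hcε⟩ := concave_lemma_shift_aux α hεpos ((M + 1) / (β - α))
  have hd : M + 1 ≤ (β - α) * r := by
    rw [div_le_iff₀ hβα] at hrR
    linarith [hrR]
  refine ⟨r, s, fun i => ⟨?_, ?_⟩⟩
  · have key : -α * ((m i : ℝ) - r) + ((n i : ℝ) - s)
        = (-α * (m i : ℝ) + (n i : ℝ)) + (α * r - s) := by ring
    rw [key]
    constructor
    · intro h
      by_contra hneg
      push_neg at hneg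
      have := hεle i hneg
      linarith
    · intro h
      linarith
  · have key : -β * ((m i : ℝ) - r) + ((n i : ℝ) - s)
        = (-β * (m i : ℝ) + (n i : ℝ)) + (α * r - s) + (β - α) * r := by ring
    rw [key]
    have := hM i
    linarith

end
end

section
/- Assume 0 < α ≤ 1/2 and 1 ≤ β < ∞. Then there is no pair (x,y) ∈ ℤ² satisfying both 0 ≤ −αx + y < α and 1 < −βx + y ≤ β. -/
/-!
Put `u = y - αx` and `v = y - βx`, and recall `α < 1 ≤ β`. If `x ≥ 0` then
`u - v = (β - α)x ≥ 0`, so `u ≥ v > 1 > α`. If `x < 0`, then `y ≥ αx > x` and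
`y ≤ β(x + 1) ≤ x + 1` pin down `y = x + 1`; now `u < α` reads `(1 - α)(x + 1) < 0`, so
`x + 1 < 0`, while `1 < v ≤ β` reads `(β - 1)x < 0 ≤ (β - 1)(x + 1)`, which is impossible.
-/

section

variable {α β : ℝ} {x y : ℤ}

theorem lt_neg_mul_add_of_nonneg (hα : α < 1) (hβ : 1 ≤ β) (hx : 0 ≤ x)
    (hv : 1 < -β * x + y) : α < -α * x + y := by
  have hvu : -β * x + y ≤ -α * x + y := by
    have : (0 : ℝ) ≤ (β - α) * x := mul_nonneg (by linarith) (by exact_mod_cast hx)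
    linarith
  linarith

theorem eq_add_one_of_neg (hα : α < 1) (hβ : 1 ≤ β) (hx : x < 0)
    (hu : 0 ≤ -α * x + y) (hv : -β * x + y ≤ β) : y = x + 1 := by
  have hx' : (x : ℝ) + 1 ≤ 0 := by exact_mod_cast Int.add_one_le_iff.mpr hx
  have hxy : x < y := by
    have : (0 : ℝ) < (1 - α) * -x := mul_pos (by linarith) (by exact_mod_cast neg_pos.mpr hx)
    exact_mod_cast (by linarith : (x : ℝ) < y)
  have hyx : y ≤ x + 1 := by
    have : (β - 1) * ((x : ℝ) + 1) ≤ 0 := mul_nonpos_of_nonneg_of_nonpos (by linarith) hx'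
    exact_mod_cast (by linarith : (y : ℝ) ≤ x + 1)
  omega

theorem not_mem_both_strips_of_lt_one_le (hα : α < 1) (hβ : 1 ≤ β) :
    ¬ ((0 ≤ -α * x + y ∧ -α * x + y < α) ∧ (1 < -β * x + y ∧ -β * x + y ≤ β)) := by
  rintro ⟨⟨hu₀, huα⟩, ⟨hv₁, hvβ⟩⟩
  rcases le_or_gt 0 x with hx | hx
  · exact huα.not_ge (lt_neg_mul_add_of_nonneg hα hβ hx hv₁).le
  · have hy : (y : ℝ) = x + 1 := by exact_mod_cast eq_add_one_of_neg hα hβ hx hu₀ hvβ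
    rw [hy] at huα hv₁ hvβ
    have hx₁ : (x : ℝ) + 1 < 0 := by nlinarith
    have hβ₁ : β = 1 := le_antisymm (by nlinarith) hβ
    subst hβ₁
    linarith

theorem no_lattice_point_general (α β : ℝ) (hα' : α ≤ 1/2) (hβ : 1 ≤ β) :
    ¬ ∃ x y : ℤ, (0 ≤ -α * (x : ℝ) + (y : ℝ) ∧ -α * (x : ℝ) + (y : ℝ) < α) ∧
      (1 < -β * (x : ℝ) + (y : ℝ) ∧ -β * (x : ℝ) + (y : ℝ) ≤ β) := by
  rintro ⟨x, y, h⟩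
  exact not_mem_both_strips_of_lt_one_le (by linarith) hβ h

/-- If `0 < α ≤ 1/2` and `1 ≤ β < ∞` then no integer point `(x,y)` satisfies
both `0 ≤ -αx+y < α` and `1 < -βx+y ≤ β`. -/
theorem no_lattice_point (α β : ℝ) (hα : 0 < α) (hα' : α ≤ 1/2) (hβ : 1 ≤ β) :
    ¬ ∃ x y : ℤ, (0 ≤ -α * (x : ℝ) + (y : ℝ) ∧ -α * (x : ℝ) + (y : ℝ) < α) ∧
      (1 < -β * (x : ℝ) + (y : ℝ) ∧ -β * (x : ℝ) + (y : ℝ) ≤ β) :=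
  no_lattice_point_general α β hα' hβ
end
end

section
/- Let γ1, γ2, λ1, λ2 be real numbers with λ1 ≠ 0 and λ2 ≠ 0, and for k ∈ ℝ let H(k) := γ1 σ1 + γ2 σ2 + λ1 cos(k) σ1 + λ2 sin(k) σ2 ∈ M_2(ℂ). Then H(k) is invertible for every k ∈ ℝ if and only if (γ1/λ1)² + (γ2/λ2)² ≠ 1. -/
/-!
Since `σ₁` and `σ₂` anticommute and square to one, `a σ₁ + b σ₂` has determinant `-(a² + b²)`,
so for real `a, b` it is invertible unless `a = b = 0`. Hence `H(k)` fails to be invertible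
exactly when `(cos k, sin k) = (-γ₁/λ₁, -γ₂/λ₂)`, and such a `k` exists iff that point lies on the
unit circle.
-/

set_option maxHeartbeats 1000000
set_option synthInstance.maxHeartbeats 400000

noncomputable section
open scoped ENNReal Classical

open Matrix in
/-- The Pauli matrix `σ₁`. -/
def sigma1 : Matrix (Fin 2) (Fin 2) ℂ := !![0, 1; 1, 0]
open Matrix in
/-- The Pauli matrix `σ₂`. -/
def sigma2 : Matrix (Fin 2) (Fin 2) ℂ := !![0, -Complex.I; Complex.I, 0]
open Matrix in
/-- The Pauli matrix `σ₃`. -/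
def sigma3 : Matrix (Fin 2) (Fin 2) ℂ := !![1, 0; 0, -1]

lemma smul_sigma1_add_smul_sigma2 (a b : ℂ) :
    a • sigma1 + b • sigma2 = !![0, a - b * Complex.I; a + b * Complex.I, 0] := by
  ext i j
  fin_cases i <;> fin_cases j <;> simp [sigma1, sigma2, sub_eq_add_neg]

lemma det_smul_sigma1_add_smul_sigma2 (a b : ℂ) :
    (a • sigma1 + b • sigma2).det = -(a ^ 2 + b ^ 2) := by
  rw [smul_sigma1_add_smul_sigma2, Matrix.det_fin_two_of]
  linear_combination b ^ 2 * Complex.I_sq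

lemma isUnit_ofReal_smul_sigma1_add_smul_sigma2_iff (a b : ℝ) :
    IsUnit ((a : ℂ) • sigma1 + (b : ℂ) • sigma2) ↔ a ≠ 0 ∨ b ≠ 0 := by
  rw [Matrix.isUnit_iff_isUnit_det, isUnit_iff_ne_zero, det_smul_sigma1_add_smul_sigma2,
    neg_ne_zero, ← not_and_or, sq, sq, ← mul_self_add_mul_self_eq_zero]
  norm_cast

lemma exists_cos_eq_and_sin_eq_iff (x y : ℝ) :
    (∃ θ, Real.cos θ = x ∧ Real.sin θ = y) ↔ x ^ 2 + y ^ 2 = 1 := by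
  constructor
  · rintro ⟨θ, rfl, rfl⟩
    exact Real.cos_sq_add_sin_sq θ
  · intro h
    have hz : ‖(⟨x, y⟩ : ℂ)‖ = 1 := by
      rw [Complex.norm_def, Complex.normSq_mk, ← sq, ← sq, h, Real.sqrt_one]
    refine ⟨Complex.arg ⟨x, y⟩, ?_, ?_⟩
    · rw [Complex.cos_arg (norm_ne_zero_iff.mp (hz.symm ▸ one_ne_zero)), hz, div_one]
    · rw [Complex.sin_arg, hz, div_one]

lemma add_mul_eq_zero_iff_eq_neg_div {γ lam c : ℝ} (hlam : lam ≠ 0) :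
    γ + lam * c = 0 ↔ c = -γ / lam := by
  rw [eq_div_iff hlam]
  constructor <;> intro h <;> linarith

/-- The 1-D class AIII bulk Hamiltonian
`H(k) = γ₁σ₁ + γ₂σ₂ + λ₁cos(k)σ₁ + λ₂sin(k)σ₂` is invertible for all `k` iff
`(γ₁/λ₁)² + (γ₂/λ₂)² ≠ 1`. -/
theorem oneD_AIII_gapped_iff (γ1 γ2 lam1 lam2 : ℝ) (h1 : lam1 ≠ 0) (h2 : lam2 ≠ 0) :
    (∀ k : ℝ, IsUnit ((γ1 : ℂ) • sigma1 + (γ2 : ℂ) • sigma2 +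
      ((lam1 * Real.cos k : ℝ) : ℂ) • sigma1 + ((lam2 * Real.sin k : ℝ) : ℂ) • sigma2)) ↔
    (γ1/lam1)^2 + (γ2/lam2)^2 ≠ 1 := by
  have hH (k : ℝ) : (γ1 : ℂ) • sigma1 + (γ2 : ℂ) • sigma2 +
      ((lam1 * Real.cos k : ℝ) : ℂ) • sigma1 + ((lam2 * Real.sin k : ℝ) : ℂ) • sigma2 =
      ((γ1 + lam1 * Real.cos k : ℝ) : ℂ) • sigma1 + ((γ2 + lam2 * Real.sin k : ℝ) : ℂ) • sigma2 := by
    push_cast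
    module
  simp_rw [hH, isUnit_ofReal_smul_sigma1_add_smul_sigma2_iff, ← not_and_or, ← not_exists,
    add_mul_eq_zero_iff_eq_neg_div h1, add_mul_eq_zero_iff_eq_neg_div h2,
    exists_cos_eq_and_sin_eq_iff, neg_div, neg_sq]

end
end
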